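/- Fix e ≥ 2 and b ≤ -2, and let T be a finite set of positive integers. If F is a finite composition of the functions S_{e,b} and I (where I(t) = t+1), and F(T) is (e,b)-good, then T is (e,b)-good. -/

import Mathlib

/-!
Write every `a ∈ T` in base `b` and append, beyond all these expansions and at an even
position, the digits `1, 0, 1, …, 0, 1` with `n` ones. This adds one common positive constant
`c` to every `a ∈ T` and adds exactly `n` to every `S a`. Hence a witness `(n, k)` for `S(T)`
gives the witness `(c, k + 1)` for `T`, and a witness `(n, k)` for `T + 1` gives `(n + 1, k)`
for `T`. Induction on the composition finishes the proof.
-/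

/-- The value of a digit list `L = [a₀, a₁, …, aₙ]` in base `b`: `Σ aᵢ bⁱ`. -/
def baseVal (b : ℤ) : List ℤ → ℤ
  | [] => 0
  | d :: L => d + b * baseVal b L

/-- `L` is the base-`b` digit expansion of `a`: digits in `[0, |b|-1]`,
leading (last) digit nonzero, with value `a`. -/
def IsDigitExpansion (b a : ℤ) (L : List ℤ) : Prop :=
  (∀ d ∈ L, 0 ≤ d ∧ d ≤ |b| - 1) ∧ L ≠ [] ∧ L.getLast! ≠ 0 ∧ baseVal b L = a

/-- `S` is the function `S_{e,b}` sending `a` to the sum of `e`-th powers of its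
base-`b` digits (and `0` to `0`). -/
def IsPowSumFun (e : ℕ) (b : ℤ) (S : ℤ → ℤ) : Prop :=
  S 0 = 0 ∧ ∀ a L, IsDigitExpansion b a L → S a = (L.map (· ^ e)).sum

/-- A finite set `T` of positive integers is `(e,b)`-good (for the digit power-sum
function `S`): for each `u` in a cycle of `S`, there are `n, k ≥ 1` with
`S^[k] (t + n) = u` for all `t ∈ T`. -/
def Good (S : ℤ → ℤ) (T : Finset ℤ) : Prop :=
  ∀ u : ℤ, 0 < u → (∃ m : ℕ, 1 ≤ m ∧ S^[m] u = u) →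
    ∃ n : ℤ, 0 < n ∧ ∃ k : ℕ, 1 ≤ k ∧ ∀ t ∈ T, S^[k] (t + n) = u

section Digits

variable {b : ℤ}

theorem baseVal_append (L M : List ℤ) :
    baseVal b (L ++ M) = baseVal b L + b ^ L.length * baseVal b M := by
  induction L with
  | nil => simp [baseVal]
  | cons d L ih => simp only [List.cons_append, baseVal, ih, List.length_cons]; ring

theorem baseVal_replicate_zero (m : ℕ) : baseVal b (List.replicate m 0) = 0 := by
  induction m with
  | zero => rfl
  | succ m ih => simp [List.replicate_succ, baseVal, ih]

theorem natAbs_ediv_lt_natAbs (hb : b ≤ -2) {a : ℤ} (ha₀ : a ≠ 0) (ha₁ : a ≠ -1) :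
    (a / b).natAbs < a.natAbs := by
  have hr₀ := Int.emod_nonneg a (b := b) (by omega)
  have hr₁ := Int.emod_lt_of_neg a (b := b) (by omega)
  have hdiv := Int.emod_add_mul_ediv a b
  generalize a / b = q at hdiv ⊢
  rcases lt_or_gt_of_ne ha₀ with ha | ha
  · have hq : 0 < q := by
      by_contra! hq
      nlinarith
    have : q < -a := by
      rcases (show 1 ≤ q by omega).eq_or_lt with rfl | hq
      · omega
      · nlinarith
    omega
  · have hq : q ≤ 0 := by
      by_contra! hq
      nlinarith
    have : -q < a := by nlinarith
    omega

theorem exists_isDigitExpansion (hb : b ≤ -2) {a : ℤ} (ha : a ≠ 0) :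
    ∃ L, IsDigitExpansion b a L := by
  induction h : a.natAbs using Nat.strong_induction_on generalizing a with
  | _ N ih =>
  have habs : |b| = -b := abs_of_neg (by omega)
  by_cases ha₁ : a = -1
  · refine ⟨[-b - 1, 1], ?_, by simp, by simp, by simp [baseVal, ha₁]; ring⟩
    simp only [List.mem_cons, List.not_mem_nil, or_false, habs]
    omega
  have hr₀ := Int.emod_nonneg a (b := b) (by omega)
  have hr₁ := Int.emod_lt_of_neg a (b := b) (by omega)
  have hdiv := Int.emod_add_mul_ediv a b
  by_cases hq : a / b = 0
  · rw [hq, mul_zero, add_zero] at hdiv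
    refine ⟨[a % b], ?_, by simp, by simpa [hdiv] using ha, by simpa [baseVal] using hdiv⟩
    simp only [List.mem_singleton, forall_eq, habs]
    omega
  obtain ⟨L, hL, hne, hlast, hval⟩ :=
    ih _ (h ▸ natAbs_ediv_lt_natAbs hb ha ha₁) hq rfl
  refine ⟨a % b :: L, ?_, by simp, ?_, by simpa [baseVal, hval] using hdiv⟩
  · simp only [List.mem_cons, forall_eq_or_imp]
    exact ⟨by omega, hL⟩
  · obtain ⟨d, L, rfl⟩ := List.exists_cons_of_ne_nil hne
    simpa using hlast

end Digits

section Padding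

variable {b : ℤ}

-- Ones only at even positions keep the value `Σ b ^ (2 * i)` positive although `b < 0`.
def spacedOnes : ℕ → List ℤ
  | 0 => [1]
  | n + 1 => 1 :: 0 :: spacedOnes n

theorem baseVal_spacedOnes_pos (b : ℤ) (n : ℕ) : 0 < baseVal b (spacedOnes n) := by
  induction n with
  | zero => simp [spacedOnes, baseVal]
  | succ n ih =>
    simp only [spacedOnes, baseVal]
    nlinarith [sq_nonneg b]

theorem isDigitExpansion_spacedOnes (hb : 2 ≤ |b|) (n : ℕ) :
    IsDigitExpansion b (baseVal b (spacedOnes n)) (spacedOnes n) := by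
  induction n with
  | zero => exact ⟨by simp [spacedOnes]; omega, by simp [spacedOnes], by simp [spacedOnes], rfl⟩
  | succ n ih =>
    obtain ⟨hd, hne, hlast, -⟩ := ih
    obtain ⟨d, L, hL⟩ := List.exists_cons_of_ne_nil hne
    refine ⟨?_, by simp [spacedOnes], by simpa [spacedOnes, hL] using hlast, rfl⟩
    simp only [spacedOnes, List.mem_cons, forall_eq_or_imp]
    exact ⟨⟨zero_le_one, by omega⟩, ⟨le_rfl, by omega⟩, hd⟩

theorem sum_map_pow_spacedOnes {e : ℕ} (he : e ≠ 0) (n : ℕ) :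
    ((spacedOnes n).map (· ^ e)).sum = n + 1 := by
  induction n with
  | zero => simp [spacedOnes]
  | succ n ih => simp [spacedOnes, ih, zero_pow he]; ring

theorem isDigitExpansion_append_pad (hb : b ≠ 0) {L P : List ℤ} {m : ℕ} {v : ℤ}
    (hL : ∀ d ∈ L, 0 ≤ d ∧ d ≤ |b| - 1) (hm : L.length ≤ m) (hP : IsDigitExpansion b v P) :
    IsDigitExpansion b (baseVal b L + b ^ m * v)
      (L ++ List.replicate (m - L.length) 0 ++ P) := by
  obtain ⟨hd, hne, hlast, hval⟩ := hP
  refine ⟨?_, by simp [hne], ?_, ?_⟩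
  · simp only [List.mem_append, List.mem_replicate]
    rintro d ((hdL | ⟨-, rfl⟩) | hdP)
    exacts [hL d hdL, ⟨le_rfl, by simpa using Int.one_le_abs hb⟩, hd d hdP]
  · rwa [List.getLast!_eq_getLast?_getD, List.getLast?_append_of_ne_nil _ hne,
      ← List.getLast!_eq_getLast?_getD]
  · simp only [baseVal_append, baseVal_replicate_zero, List.length_append, List.length_replicate,
      Nat.add_sub_cancel' hm, hval]
    ring

end Padding

namespace IsPowSumFun

variable {e : ℕ} {b : ℤ} {S : ℤ → ℤ}

theorem exists_digits (hS : IsPowSumFun e b S) (hb : b ≤ -2) (a : ℤ) :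
    ∃ L : List ℤ, (∀ d ∈ L, 0 ≤ d ∧ d ≤ |b| - 1) ∧ baseVal b L = a ∧
      S a = (L.map (· ^ e)).sum := by
  rcases eq_or_ne a 0 with rfl | ha
  · exact ⟨[], by simp, rfl, hS.1⟩
  · obtain ⟨L, hL⟩ := exists_isDigitExpansion hb ha
    exact ⟨L, hL.1, hL.2.2.2, hS.2 a L hL⟩

theorem exists_shift (hS : IsPowSumFun e b S) (he : e ≠ 0) (hb : b ≤ -2) (A : Finset ℤ)
    {n : ℤ} (hn : 0 < n) : ∃ c, 0 < c ∧ ∀ a ∈ A, S (a + c) = S a + n := by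
  choose L hL using hS.exists_digits hb
  set m := 2 * A.sup fun a => (L a).length
  set P := spacedOnes (n.toNat - 1)
  have hP : IsDigitExpansion b (baseVal b P) P :=
    isDigitExpansion_spacedOnes (by rw [abs_of_neg (by omega)]; omega) _
  have hPsum : (P.map (· ^ e)).sum = n := by
    rw [sum_map_pow_spacedOnes he]
    omega
  refine ⟨b ^ m * baseVal b P, ?_, fun a ha => ?_⟩
  · exact mul_pos (Even.pow_pos (even_two_mul _) (by omega)) (baseVal_spacedOnes_pos b _)
  obtain ⟨hdigits, hval, hSa⟩ := hL a
  have hm : (L a).length ≤ m := by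
    have := Finset.le_sup (f := fun a => (L a).length) ha
    omega
  have hpad := isDigitExpansion_append_pad (by omega) hdigits hm hP
  rw [hval] at hpad
  rw [hS.2 _ _ hpad, hSa]
  simp [zero_pow he, hPsum]

end IsPowSumFun

namespace Good

variable {S : ℤ → ℤ} {A : Finset ℤ}

theorem of_image_add_one (h : Good S (A.image (· + 1))) : Good S A := by
  intro u hu hcyc
  obtain ⟨n, hn, k, hk, hA⟩ := h u hu hcyc
  refine ⟨n + 1, by omega, k, hk, fun t ht => ?_⟩
  simpa [add_assoc, add_comm 1 n] using hA (t + 1) (Finset.mem_image_of_mem _ ht)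

theorem of_image_self (hshift : ∀ n, 0 < n → ∃ c, 0 < c ∧ ∀ a ∈ A, S (a + c) = S a + n)
    (h : Good S (A.image S)) : Good S A := by
  intro u hu hcyc
  obtain ⟨n, hn, k, hk, hA⟩ := h u hu hcyc
  obtain ⟨c, hc, hSc⟩ := hshift n hn
  refine ⟨c, hc, k + 1, by omega, fun t ht => ?_⟩
  rw [Function.iterate_succ_apply, hSc t ht]
  exact hA (S t) (Finset.mem_image_of_mem S ht)

end Good

theorem good_pullback_general (e : ℕ) (he : 2 ≤ e) (b : ℤ) (hb : b ≤ -2)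
    (S : ℤ → ℤ) (hS : IsPowSumFun e b S)
    (T : Finset ℤ)
    (fs : List (ℤ → ℤ)) (hfs : ∀ f ∈ fs, f = S ∨ f = fun t => t + 1)
    (hgood : Good S (T.image (fs.foldr (· ∘ ·) id))) :
    Good S T := by
  induction fs with
  | nil => simpa using hgood
  | cons f fs ih =>
    rw [List.foldr_cons, ← Finset.image_image] at hgood
    refine ih (fun g hg => hfs g (List.mem_cons_of_mem f hg)) ?_
    rcases hfs f List.mem_cons_self with rfl | rfl
    · exact hgood.of_image_self fun n hn => hS.exists_shift (by omega) hb _ hn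
    · exact hgood.of_image_add_one

theorem good_pullback (e : ℕ) (he : 2 ≤ e) (b : ℤ) (hb : b ≤ -2)
    (S : ℤ → ℤ) (hS : IsPowSumFun e b S)
    (T : Finset ℤ) (hT : ∀ t ∈ T, 0 < t)
    (fs : List (ℤ → ℤ)) (hfs : ∀ f ∈ fs, f = S ∨ f = fun t => t + 1)
    (hgood : Good S (T.image (fs.foldr (· ∘ ·) id))) :
    Good S T :=
  good_pullback_general e he b hb S hS T fs hfs hgood
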